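/- arXiv:1906.10010 — 6 statements merged into one kernel-verified Lean document; each statement's English description precedes it below -/
import Mathlib

section
/- Let X : [0,L] → ℝ² be a unit-speed W^{2,∞} curve whose angle function φ (a continuous determination of the angle from X'(0) to X'(s)) is nondecreasing and satisfies 0 ≤ φ(s) ≤ Ω for all s, where 0 < Ω < π. Then for every s ∈ [0,L], the entire curve lies in the closed half-plane bounded by the tangent line at X(s) on the side of the inward normal N(s) = σ(X'(s)), where σ is rotation by π/2. Formally: for all s, t ∈ [0,L], ⟨X(t) − X(s), σ(X'(s))⟩ ≥ 0. -/
open Set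

/-!
The signed distance `g(t) = ⟨X(t) − X(s), σ X'(s)⟩` from the tangent line at `X(s)` has
derivative `sin (φ t − φ s)`. Since `φ` is nondecreasing with total variation `Ω < π`,
this derivative is `≤ 0` before `s` and `≥ 0` after `s`, so `g` attains its minimum `g(s) = 0`
at `s`.
-/

theorem isMinOn_Icc_of_hasDerivWithinAt {g g' : ℝ → ℝ} {a b s : ℝ} (hs : s ∈ Icc a b)
    (hg : ∀ x ∈ Icc a b, HasDerivWithinAt g (g' x) (Icc a b) x)
    (hleft : ∀ x ∈ Icc a s, g' x ≤ 0) (hright : ∀ x ∈ Icc s b, 0 ≤ g' x) :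
    IsMinOn g (Icc a b) s := by
  have hcont : ContinuousOn g (Icc a b) := fun x hx => (hg x hx).continuousWithinAt
  have hderiv : ∀ {c d : ℝ}, Icc c d ⊆ Icc a b →
      ∀ x ∈ interior (Icc c d), HasDerivWithinAt g (g' x) (interior (Icc c d)) x := by
    intro c d hcd x hx
    rw [interior_Icc] at hx ⊢
    exact (hg x (hcd (Ioo_subset_Icc_self hx))).mono (Ioo_subset_Icc_self.trans hcd)
  have hleft_sub : Icc a s ⊆ Icc a b := Icc_subset_Icc le_rfl hs.2
  have hright_sub : Icc s b ⊆ Icc a b := Icc_subset_Icc hs.1 le_rfl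
  have hanti : AntitoneOn g (Icc a s) :=
    antitoneOn_of_hasDerivWithinAt_nonpos (convex_Icc a s) (hcont.mono hleft_sub)
      (hderiv hleft_sub) fun x hx => hleft x (interior_subset hx)
  have hmono : MonotoneOn g (Icc s b) :=
    monotoneOn_of_hasDerivWithinAt_nonneg (convex_Icc s b) (hcont.mono hright_sub)
      (hderiv hright_sub) fun x hx => hright x (interior_subset hx)
  intro t ht
  rcases le_total s t with hst | hts
  · exact hmono ⟨le_rfl, hs.2⟩ ⟨hst, ht.2⟩ hst
  · exact hanti ⟨ht.1, hts⟩ ⟨hs.1, le_rfl⟩ hts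

theorem HasDerivWithinAt.normal_component {X : ℝ → ℝ × ℝ} {S : Set ℝ} {x α θ : ℝ}
    (p : ℝ × ℝ) (hX : HasDerivWithinAt X (Real.cos α, Real.sin α) S x) :
    HasDerivWithinAt (fun u => ((X u).1 - p.1) * (-Real.sin θ) + ((X u).2 - p.2) * Real.cos θ)
      (Real.sin (α - θ)) S x := by
  have h1 : HasDerivWithinAt (fun u => (X u).1) (Real.cos α) S x := hX.fst
  have h2 : HasDerivWithinAt (fun u => (X u).2) (Real.sin α) S x := hX.snd
  have hsin : Real.sin (α - θ) = Real.cos α * (-Real.sin θ) + Real.sin α * Real.cos θ := by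
    rw [Real.sin_sub]
    ring
  rw [hsin]
  exact ((h1.sub_const p.1).mul_const (-Real.sin θ)).add
    ((h2.sub_const p.2).mul_const (Real.cos θ))

theorem stmt1_general (L Ω : ℝ) (hΩ : Ω ∈ Ioo 0 Real.pi)
    (X : ℝ → ℝ × ℝ) (φ : ℝ → ℝ)
    (hmono : MonotoneOn φ (Icc 0 L))
    (hφ0 : φ 0 = 0) (hφL : φ L = Ω)
    -- unit-speed parametrization with tangent angle φ
    (hX : ∀ s ∈ Icc 0 L,
      HasDerivWithinAt X (Real.cos (φ s), Real.sin (φ s)) (Icc 0 L) s) :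
    ∀ s ∈ Icc 0 L, ∀ t ∈ Icc 0 L,
      ((X t).1 - (X s).1) * (-Real.sin (φ s)) +
      ((X t).2 - (X s).2) * Real.cos (φ s) ≥ 0 := by
  intro s hs t ht
  have hφ_mem : ∀ x ∈ Icc 0 L, φ x ∈ Icc 0 Ω := fun x hx =>
    ⟨hφ0 ▸ hmono ⟨le_rfl, hs.1.trans hs.2⟩ hx hx.1,
      hφL ▸ hmono hx ⟨hs.1.trans hs.2, le_rfl⟩ hx.2⟩
  have hmin := isMinOn_Icc_of_hasDerivWithinAt hs
    (fun x hx => (hX x hx).normal_component (X s) (θ := φ s))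
    (fun x hx => by
      have hx' : x ∈ Icc 0 L := ⟨hx.1, hx.2.trans hs.2⟩
      obtain ⟨hx0, -⟩ := hφ_mem x hx'
      obtain ⟨-, hsΩ⟩ := hφ_mem s hs
      have := hmono hx' hs hx.2
      exact Real.sin_nonpos_of_nonpos_of_neg_pi_le (by linarith) (by linarith [hΩ.2]))
    (fun x hx => by
      have hx' : x ∈ Icc 0 L := ⟨hs.1.trans hx.1, hx.2⟩
      obtain ⟨-, hxΩ⟩ := hφ_mem x hx'
      obtain ⟨hs0, -⟩ := hφ_mem s hs
      have := hmono hs hx' hx.1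
      exact Real.sin_nonneg_of_nonneg_of_le_pi (by linarith) (by linarith [hΩ.2]))
  simpa using hmin ht

/-- Convexity lemma: a unit-speed curve with nondecreasing tangent angle
`φ`, `φ(0) = 0`, `φ(L) = Ω ∈ (0,π)`, lies, for every `s`, in the closed half-plane
bounded by the tangent line at `X(s)`, on the side of the inward normal
`σ(X'(s)) = (−sin φ(s), cos φ(s))` (where `σ` is rotation by `π/2`). -/
theorem stmt1 (L Ω : ℝ) (hL : 0 < L) (hΩ : Ω ∈ Ioo 0 Real.pi)
    (X : ℝ → ℝ × ℝ) (φ : ℝ → ℝ)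
    (hφc : ContinuousOn φ (Icc 0 L))
    (hmono : MonotoneOn φ (Icc 0 L))
    (hφ0 : φ 0 = 0) (hφL : φ L = Ω)
    -- unit-speed parametrization with tangent angle φ
    (hX : ∀ s ∈ Icc 0 L,
      HasDerivWithinAt X (Real.cos (φ s), Real.sin (φ s)) (Icc 0 L) s) :
    ∀ s ∈ Icc 0 L, ∀ t ∈ Icc 0 L,
      ((X t).1 - (X s).1) * (-Real.sin (φ s)) +
      ((X t).2 - (X s).2) * Real.cos (φ s) ≥ 0 :=
  stmt1_general L Ω hΩ X φ hmono hφ0 hφL hX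
end

section
/- Let X : [0,L] → ℝ² be a unit-speed curve with X(0) = A, X(L) = B, and nondecreasing angle function φ with φ(0) = 0 and φ(L) = Ω ∈ (0,π). Then the length satisfies L ≤ b̃ / cos(Ω/2), where b̃ is the first coordinate of B − A in the orthonormal frame obtained by rotating the initial tangent direction X'(0) by angle Ω/2. -/
/-!
Measured along the unit vector of angle `Ω / 2`, the tangent `(cos φ, sin φ)` has coordinate
`cos (φ - Ω / 2) ≥ cos (Ω / 2)`, because `φ` stays in `[0, Ω]`. So this coordinate of `X`
grows at rate at least `cos (Ω / 2)`, and over `[0, L]` it gains `b̃ ≥ L cos (Ω / 2)`.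
-/

open Set Real

lemma mul_sub_le_map_sub_of_le_hasDerivWithinAt {E : Type*} [NormedAddCommGroup E]
    [NormedSpace ℝ E] (ℓ : E →L[ℝ] ℝ) {X X' : ℝ → E} {a b c : ℝ} (hab : a ≤ b)
    (hX : ∀ s ∈ Icc a b, HasDerivWithinAt X (X' s) (Icc a b) s)
    (hc : ∀ s ∈ Ioo a b, c ≤ ℓ (X' s)) :
    c * (b - a) ≤ ℓ (X b - X a) := by
  have hmono : MonotoneOn (fun s => ℓ (X s) - c * s) (Icc a b) := by
    have hderiv : ∀ s ∈ Icc a b,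
        HasDerivWithinAt (fun s => ℓ (X s) - c * s) (ℓ (X' s) - c) (Icc a b) s := fun s hs => by
      have := (ℓ.hasFDerivAt.comp_hasDerivWithinAt s (hX s hs)).sub
        ((hasDerivWithinAt_id s _).const_mul c)
      rwa [mul_one] at this
    refine monotoneOn_of_hasDerivWithinAt_nonneg (convex_Icc a b)
      (fun s hs => (hderiv s hs).continuousWithinAt)
      (fun s hs => (hderiv s (interior_subset hs)).mono interior_subset) fun s hs => ?_
    rw [interior_Icc] at hs
    exact sub_nonneg.2 (hc s hs)
  have := hmono ⟨le_rfl, hab⟩ ⟨hab, le_rfl⟩ hab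
  simp only [map_sub] at this ⊢
  linarith

lemma cos_half_le_cos_sub_half {θ Ω : ℝ} (hθ₀ : 0 ≤ θ) (hθΩ : θ ≤ Ω) (hΩ : Ω ≤ 2 * π) :
    cos (Ω / 2) ≤ cos (θ - Ω / 2) := by
  rw [← cos_abs (θ - Ω / 2)]
  exact cos_le_cos_of_nonneg_of_le_pi (abs_nonneg _) (by linarith)
    (abs_le.2 ⟨by linarith, by linarith⟩)

noncomputable def coordAlong (α : ℝ) : ℝ × ℝ →L[ℝ] ℝ :=
  cos α • ContinuousLinearMap.fst ℝ ℝ ℝ + sin α • ContinuousLinearMap.snd ℝ ℝ ℝ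

@[simp]
lemma coordAlong_apply (α : ℝ) (v : ℝ × ℝ) : coordAlong α v = v.1 * cos α + v.2 * sin α := by
  simp [coordAlong, mul_comm]

lemma coordAlong_cos_sin (α θ : ℝ) : coordAlong α (cos θ, sin θ) = cos (θ - α) := by
  rw [coordAlong_apply, cos_sub]

theorem stmt3_general (L Ω : ℝ) (hL : 0 < L) (hΩ : Ω ∈ Ioo 0 Real.pi)
    (X : ℝ → ℝ × ℝ) (φ : ℝ → ℝ)
    (hmono : MonotoneOn φ (Icc 0 L))
    (hφ0 : φ 0 = 0) (hφL : φ L = Ω)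
    (hX : ∀ s ∈ Icc 0 L,
      HasDerivWithinAt X (Real.cos (φ s), Real.sin (φ s)) (Icc 0 L) s) :
    L ≤ (((X L).1 - (X 0).1) * Real.cos (Ω / 2) +
         ((X L).2 - (X 0).2) * Real.sin (Ω / 2)) / Real.cos (Ω / 2) := by
  obtain ⟨hΩ₀, hΩπ⟩ := hΩ
  have hcos : 0 < cos (Ω / 2) := cos_pos_of_mem_Ioo ⟨by linarith [pi_pos], by linarith⟩
  have hslope : ∀ s ∈ Ioo 0 L, cos (Ω / 2) ≤ coordAlong (Ω / 2) (cos (φ s), sin (φ s)) := by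
    intro s hs
    have hs' := Ioo_subset_Icc_self hs
    rw [coordAlong_cos_sin]
    exact cos_half_le_cos_sub_half (hφ0 ▸ hmono ⟨le_rfl, hL.le⟩ hs' hs.1.le)
      (hφL ▸ hmono hs' ⟨hL.le, le_rfl⟩ hs.2.le) (by linarith)
  have hgain := mul_sub_le_map_sub_of_le_hasDerivWithinAt (coordAlong (Ω / 2)) hL.le hX hslope
  rw [le_div_iff₀ hcos]
  simpa [mul_comm] using hgain

/-- Length bound: for a unit-speed curve from `A = X 0` to `B = X L` with
nondecreasing tangent angle `φ`, `φ(0) = 0`, `φ(L) = Ω ∈ (0,π)` (in the frame where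
`X'(0) = (1,0)`), one has `L ≤ b̃ / cos(Ω/2)`, where `b̃ = ⟨B − A, i⟩` and
`i = (cos(Ω/2), sin(Ω/2))` is the initial tangent rotated by `Ω/2`. -/
theorem stmt3 (L Ω : ℝ) (hL : 0 < L) (hΩ : Ω ∈ Ioo 0 Real.pi)
    (X : ℝ → ℝ × ℝ) (φ : ℝ → ℝ)
    (hφc : ContinuousOn φ (Icc 0 L))
    (hmono : MonotoneOn φ (Icc 0 L))
    (hφ0 : φ 0 = 0) (hφL : φ L = Ω)
    (hX : ∀ s ∈ Icc 0 L,
      HasDerivWithinAt X (Real.cos (φ s), Real.sin (φ s)) (Icc 0 L) s) :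
    L ≤ (((X L).1 - (X 0).1) * Real.cos (Ω / 2) +
         ((X L).2 - (X 0).2) * Real.sin (Ω / 2)) / Real.cos (Ω / 2) :=
  stmt3_general L Ω hL hΩ X φ hmono hφ0 hφL hX
end

section
/- Let O, A, B be pairwise distinct points of the plane with OA ≠ OB, α = (O−A)/OA, β = (B−O)/OB, and oriented angle Ω = (α, β) ∈ (0,π). Then there exists a unique curve in the class 𝓔 (C¹, W^{2,∞}, unit-speed from A to B with initial tangent α, final tangent β, and nondecreasing tangent angle) that consists of exactly one circular arc of some radius R_a > 0 with arc length in (0, R_a π) together with one line segment of positive length. The radius R_a depends only on O, A, B, and the maximum curvature of this curve equals 1/R_a. -/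
/-!
Put `a = OA`, `b = OB`. Since `B - A = (O - A) + (B - O)`, the endpoint condition says, after
division by `α`, that the displacement `∫₀ᴸ e^{iφ}` of the curve is `a + b e^{iΩ}`, that of the
broken line `A O B`. A segment–arc curve is a segment of length `d`, an arc of radius `R` turning
by `Ω`, and a segment of length `e`, with exactly one of `d`, `e` nonzero; its displacement is
`d + R (e^{iΩ} - 1) / i + e e^{iΩ}`, and the broken line is the case `R = 0`, `d = a`, `e = b`.
Comparing real and imaginary parts with the half-angle formulas, the two displacements agree
exactly when `d - e = a - b` and `R sin(Ω/2) = (b - e) cos(Ω/2)`. This fixes the order of segment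
and arc, the length of the segment and `R = min(a, b) cot(Ω/2)`. The curve is determined by its
tangent angle, being the integral of `α e^{iφ}`, and the tangent angle has slope `1/R` on the arc.
-/

open Set

/-- The class 𝓔: unit-speed planar curves (identified with ℂ) of class `C¹` and
`W^{2,∞}` from `A` to `B`, with initial tangent `α`, tangent angle `φ` (so that
`X'(s) = α e^{iφ(s)}`), `φ` nondecreasing (nonnegative signed curvature), `φ(0) = 0`
and `φ(L) = Ω` (so the final tangent is `α e^{iΩ} = β`). -/
structure CurveE (A B α : ℂ) (Ω : ℝ) where
  L : ℝ
  X : ℝ → ℂ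
  φ : ℝ → ℝ
  hL : 0 < L
  hX0 : X 0 = A
  hXL : X L = B
  hφ0 : φ 0 = 0
  hφL : φ L = Ω
  hmono : MonotoneOn φ (Icc 0 L)
  hcont : ContinuousOn φ (Icc 0 L)
  hderiv : ∀ s ∈ Icc 0 L,
    HasDerivWithinAt X (α * Complex.exp ((φ s : ℂ) * Complex.I)) (Icc 0 L) s
  hW2 : ∃ K : ℝ, ∀ s ∈ Icc 0 L, ∀ t ∈ Icc 0 L, |φ s - φ t| ≤ K * |s - t|

/-- `c` consists of exactly one line segment of positive length and one circular arc
of radius `R` (tangent angle piecewise: constant on the segment, affine with slope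
`1/R` on the arc), in either order. -/
def IsSegArc {A B α : ℂ} {Ω : ℝ} (c : CurveE A B α Ω) (R : ℝ) : Prop :=
  0 < R ∧ ∃ m : ℝ, 0 < m ∧ m < c.L ∧
    (((∀ s ∈ Icc 0 m, c.φ s = 0) ∧ (∀ s ∈ Icc m c.L, c.φ s = (s - m) / R)) ∨
     ((∀ s ∈ Icc 0 m, c.φ s = s / R) ∧ (∀ s ∈ Icc m c.L, c.φ s = m / R)))

open Complex intervalIntegral

noncomputable def segArcSegAngle (d R Ω s : ℝ) : ℝ := max 0 (min ((s - d) / R) Ω)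

noncomputable def segArcSegDisplacement (d R Ω e : ℝ) : ℂ :=
  d + R / I * (exp (Ω * I) - 1) + e * exp (Ω * I)

section segArcSegAngle

variable {d R Ω s : ℝ}

lemma segArcSegAngle_of_le (hR : 0 ≤ R) (hs : s ≤ d) : segArcSegAngle d R Ω s = 0 :=
  max_eq_left <| (min_le_left _ _).trans <| div_nonpos_of_nonpos_of_nonneg (by linarith) hR

lemma segArcSegAngle_of_mem (hR : 0 < R) (hs : s ∈ Icc d (d + R * Ω)) :
    segArcSegAngle d R Ω s = (s - d) / R := by
  have hle : (s - d) / R ≤ Ω := by rw [div_le_iff₀ hR]; linarith [hs.2]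
  rw [segArcSegAngle, min_eq_left hle, max_eq_right (div_nonneg (by linarith [hs.1]) hR.le)]

lemma segArcSegAngle_of_ge (hR : 0 < R) (hΩ : 0 ≤ Ω) (hs : d + R * Ω ≤ s) :
    segArcSegAngle d R Ω s = Ω := by
  have hle : Ω ≤ (s - d) / R := by rw [le_div_iff₀ hR]; linarith
  rw [segArcSegAngle, min_eq_right hle, max_eq_right hΩ]

@[fun_prop]
lemma continuous_segArcSegAngle : Continuous (segArcSegAngle d R Ω) := by
  unfold segArcSegAngle; fun_prop

lemma monotone_segArcSegAngle (hR : 0 ≤ R) : Monotone (segArcSegAngle d R Ω) :=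
  fun _ _ h ↦ max_le_max le_rfl <| min_le_min (div_le_div_of_nonneg_right (by linarith) hR) le_rfl

lemma abs_segArcSegAngle_sub_le (hR : 0 < R) (s t : ℝ) :
    |segArcSegAngle d R Ω s - segArcSegAngle d R Ω t| ≤ 1 / R * |s - t| := by
  simp only [segArcSegAngle, max_comm (0 : ℝ)]
  calc _ ≤ |min ((s - d) / R) Ω - min ((t - d) / R) Ω| := abs_max_sub_max_le_abs _ _ _
    _ ≤ max |(s - d) / R - (t - d) / R| |Ω - Ω| := abs_min_sub_min_le_max _ _ _ _
    _ = 1 / R * |s - t| := by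
      rw [sub_self, abs_zero, max_eq_left (abs_nonneg _), ← sub_div, sub_sub_sub_cancel_right,
        abs_div, abs_of_pos hR, one_div_mul_eq_div]

lemma integral_exp_segArcSegAngle (hd : 0 ≤ d) (hR : 0 < R) (hΩ : 0 ≤ Ω) {e : ℝ} (he : 0 ≤ e) :
    ∫ t in (0 : ℝ)..d + R * Ω + e, exp (segArcSegAngle d R Ω t * I) =
      segArcSegDisplacement d R Ω e := by
  have hcont : Continuous fun t ↦ exp (segArcSegAngle d R Ω t * I) := by fun_prop
  have hRΩ : 0 ≤ R * Ω := by positivity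
  have hseg₁ : ∫ t in (0 : ℝ)..d, exp (segArcSegAngle d R Ω t * I) = d := by
    rw [integral_congr (g := fun _ ↦ 1), integral_const, real_smul, mul_one, sub_zero]
    intro t ht
    rw [uIcc_of_le hd] at ht
    simp [segArcSegAngle_of_le hR.le ht.2]
  have harc : ∫ t in d..d + R * Ω, exp (segArcSegAngle d R Ω t * I) =
      R / I * (exp (Ω * I) - 1) := by
    rw [integral_congr (g := fun t ↦ exp (I / R * ↑(t - d))), integral_comp_sub_right
      (fun t : ℝ ↦ exp (I / R * t)), integral_exp_mul_complex (by simp [hR.ne'])]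
    · have : (R : ℂ) ≠ 0 := by exact_mod_cast hR.ne'
      simp only [sub_self, ofReal_zero, mul_zero, Complex.exp_zero, add_sub_cancel_left, ofReal_mul]
      field_simp
    · intro t ht
      rw [uIcc_of_le (by linarith)] at ht
      simp only [segArcSegAngle_of_mem hR ht, ofReal_div]
      ring_nf
  have hseg₂ : ∫ t in d + R * Ω..d + R * Ω + e, exp (segArcSegAngle d R Ω t * I) =
      e * exp (Ω * I) := by
    rw [integral_congr (g := fun _ ↦ exp (Ω * I)), integral_const, add_sub_cancel_left,
      real_smul]
    intro t ht
    rw [uIcc_of_le (by linarith)] at ht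
    simp [segArcSegAngle_of_ge hR hΩ ht.1]
  rw [← integral_add_adjacent_intervals (hcont.intervalIntegrable _ _)
      (hcont.intervalIntegrable _ (d + R * Ω + e)),
    ← integral_add_adjacent_intervals (hcont.intervalIntegrable _ d)
      (hcont.intervalIntegrable _ _), hseg₁, harc, hseg₂,
    segArcSegDisplacement]

end segArcSegAngle

lemma sin_half_pos_of_mem_Ioo {Ω : ℝ} (hΩ : Ω ∈ Ioo 0 Real.pi) : 0 < Real.sin (Ω / 2) :=
  Real.sin_pos_of_pos_of_lt_pi (by linarith [hΩ.1]) (by linarith [hΩ.2, Real.pi_pos])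

lemma segArcSegDisplacement_eq_iff {Ω : ℝ} (hΩ : Ω ∈ Ioo 0 Real.pi) (d R e d' R' e' : ℝ) :
    segArcSegDisplacement d R Ω e = segArcSegDisplacement d' R' Ω e' ↔
      d - e = d' - e' ∧ (R - R') * Real.sin (Ω / 2) = (e' - e) * Real.cos (Ω / 2) := by
  have hsin : Real.sin Ω = 2 * Real.sin (Ω / 2) * Real.cos (Ω / 2) := by
    rw [← Real.sin_two_mul, mul_div_cancel₀ _ two_ne_zero]
  have hcos : Real.cos Ω = 1 - 2 * Real.sin (Ω / 2) ^ 2 := by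
    rw [← Real.cos_two_mul_eq_one_sub, mul_div_cancel₀ _ two_ne_zero]
  have hpyth := Real.sin_sq_add_cos_sq (Ω / 2)
  rw [segArcSegDisplacement, segArcSegDisplacement, exp_mul_I, ← ofReal_cos, ← ofReal_sin,
    Complex.ext_iff]
  simp only [div_I, add_re, add_im, mul_re, mul_im, ofReal_re, ofReal_im, neg_re, neg_im, I_re,
    I_im, sub_re, sub_im, one_re, one_im]
  rw [hsin, hcos]
  constructor
  · rintro ⟨hre, him⟩
    have hR : (R - R') * Real.sin (Ω / 2) = (e' - e) * Real.cos (Ω / 2) := by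
      refine mul_left_cancel₀ (mul_ne_zero two_ne_zero (sin_half_pos_of_mem_Ioo hΩ).ne') ?_
      linear_combination him
    exact ⟨by linear_combination hre - 2 * Real.cos (Ω / 2) * hR + 2 * (e - e') * hpyth, hR⟩
  · rintro ⟨hde, hR⟩
    constructor
    · linear_combination hde + 2 * Real.cos (Ω / 2) * hR - 2 * (e - e') * hpyth
    · linear_combination 2 * Real.sin (Ω / 2) * hR

noncomputable def arcRadius (a b Ω : ℝ) : ℝ := min a b * Real.cos (Ω / 2) / Real.sin (Ω / 2)

section arcRadius

variable {a b Ω : ℝ}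

lemma arcRadius_pos (ha : 0 < a) (hb : 0 < b) (hΩ : Ω ∈ Ioo 0 Real.pi) : 0 < arcRadius a b Ω :=
  div_pos (mul_pos (lt_min ha hb) (Real.cos_pos_of_mem_Ioo
    ⟨by linarith [hΩ.1, Real.pi_pos], by linarith [hΩ.2]⟩)) (sin_half_pos_of_mem_Ioo hΩ)

lemma eq_arcRadius_iff (hΩ : Ω ∈ Ioo 0 Real.pi) {R : ℝ} :
    R = arcRadius a b Ω ↔ R * Real.sin (Ω / 2) = min a b * Real.cos (Ω / 2) :=
  eq_div_iff (sin_half_pos_of_mem_Ioo hΩ).ne'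

end arcRadius

def ExactlyOnePos (d e : ℝ) : Prop := 0 < d ∧ e = 0 ∨ d = 0 ∧ 0 < e

namespace ExactlyOnePos

variable {d e : ℝ}

lemma nonneg_left (h : ExactlyOnePos d e) : 0 ≤ d := by
  rcases h with ⟨hd, -⟩ | ⟨rfl, -⟩ <;> linarith

lemma nonneg_right (h : ExactlyOnePos d e) : 0 ≤ e := by
  rcases h with ⟨-, rfl⟩ | ⟨-, he⟩ <;> linarith

lemma eq_max_sub {a b : ℝ} (h : ExactlyOnePos d e) (hsub : d - e = a - b) :
    d = max (a - b) 0 ∧ e = max (b - a) 0 := by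
  unfold ExactlyOnePos at h
  grind

lemma exists_sub_eq {x : ℝ} (hx : x ≠ 0) : ∃ d e, ExactlyOnePos d e ∧ d - e = x := by
  rcases hx.lt_or_gt with hneg | hpos
  · exact ⟨0, -x, .inr ⟨rfl, by linarith⟩, by ring⟩
  · exact ⟨x, 0, .inl ⟨hpos, rfl⟩, by ring⟩

end ExactlyOnePos

namespace CurveE

variable {A B α : ℂ} {Ω : ℝ} (c : CurveE A B α Ω)

theorem X_eq_integral {s : ℝ} (hs : s ∈ Icc 0 c.L) :
    c.X s = A + α * ∫ t in (0 : ℝ)..s, exp (c.φ t * I) := by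
  have hsub : Icc 0 s ⊆ Icc 0 c.L := Icc_subset_Icc_right hs.2
  have hintegrand : ContinuousOn (fun t ↦ α * exp (c.φ t * I)) (Icc 0 s) :=
    continuousOn_const.mul (continuous_exp.comp_continuousOn
      ((continuous_ofReal.comp_continuousOn (c.hcont.mono hsub)).mul continuousOn_const))
  have hX : ContinuousOn c.X (Icc 0 s) :=
    fun t ht ↦ (c.hderiv t (hsub ht)).continuousWithinAt.mono hsub
  have hFTC : ∫ t in (0 : ℝ)..s, α * exp (c.φ t * I) = c.X s - c.X 0 :=
    integral_eq_sub_of_hasDerivAt_of_le hs.1 hX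
      (fun t ht ↦ (c.hderiv t (hsub (Ioo_subset_Icc_self ht))).hasDerivAt
        (Icc_mem_nhds ht.1 (ht.2.trans_le hs.2)))
      (hintegrand.intervalIntegrable_of_Icc hs.1)
  rw [← integral_const_mul, hFTC, c.hX0]
  ring
theorem X_eq_integral_of_eqOn {ψ : ℝ → ℝ} (hψ : EqOn c.φ ψ (Icc 0 c.L)) {s : ℝ}
    (hs : s ∈ Icc 0 c.L) : c.X s = A + α * ∫ t in (0 : ℝ)..s, exp (ψ t * I) := by
  rw [c.X_eq_integral hs]
  congr 2
  refine integral_congr fun t ht ↦ ?_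
  rw [uIcc_of_le hs.1] at ht
  simp only [hψ (Icc_subset_Icc_right hs.2 ht)]

theorem X_eqOn_of_φ_eqOn (c' : CurveE A B α Ω) (hL : c.L = c'.L)
    (hφ : EqOn c.φ c'.φ (Icc 0 c.L)) : EqOn c.X c'.X (Icc 0 c.L) := fun s hs ↦ by
  rw [c.X_eq_integral_of_eqOn hφ hs, c'.X_eq_integral (hL ▸ hs)]

theorem eq_add_integral_of_eqOn {ψ : ℝ → ℝ} (hψ : EqOn c.φ ψ (Icc 0 c.L)) :
    B = A + α * ∫ t in (0 : ℝ)..c.L, exp (ψ t * I) :=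
  c.hXL.symm.trans (c.X_eq_integral_of_eqOn hψ ⟨c.hL.le, le_rfl⟩)

theorem exists_of_angle {L K : ℝ} {φ : ℝ → ℝ} (hL : 0 < L) (hφ : Continuous φ) (hφ0 : φ 0 = 0)
    (hφL : φ L = Ω) (hmono : MonotoneOn φ (Icc 0 L))
    (hlip : ∀ s ∈ Icc 0 L, ∀ t ∈ Icc 0 L, |φ s - φ t| ≤ K * |s - t|)
    (hB : A + α * ∫ t in (0 : ℝ)..L, exp (φ t * I) = B) :
    ∃ c : CurveE A B α Ω, c.L = L ∧ c.φ = φ := by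
  have hcont : Continuous fun t ↦ exp (φ t * I) := by fun_prop
  have hX (s : ℝ) : HasDerivAt (fun s ↦ A + α * ∫ t in (0 : ℝ)..s, exp (φ t * I))
      (α * exp (φ s * I)) s :=
    ((hcont.integral_hasStrictDerivAt 0 s).hasDerivAt.const_mul α).const_add A
  exact ⟨{ L := L
           X := fun s ↦ A + α * ∫ t in (0 : ℝ)..s, exp (φ t * I)
           φ := φ
           hL := hL
           hX0 := by simp
           hXL := hB
           hφ0 := hφ0
           hφL := hφL
           hmono := hmono
           hcont := hφ.continuousOn
           hderiv := fun s _ ↦ (hX s).hasDerivWithinAt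
           hW2 := ⟨K, hlip⟩ }, rfl, rfl⟩

theorem isSegArc_iff (hΩ : 0 < Ω) {R : ℝ} :
    IsSegArc c R ↔ 0 < R ∧ ∃ d e : ℝ, ExactlyOnePos d e ∧
      c.L = d + R * Ω + e ∧ EqOn c.φ (segArcSegAngle d R Ω) (Icc 0 c.L) := by
  constructor
  · rintro ⟨hR, m, hm0, hmL, ⟨hseg, harc⟩ | ⟨harc, hseg⟩⟩
    · have hLm : c.L = m + R * Ω := by
        have := c.hφL ▸ harc c.L ⟨hmL.le, le_rfl⟩
        field_simp at this
        linarith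
      refine ⟨hR, m, 0, .inl ⟨hm0, rfl⟩, by rw [add_zero, hLm], fun s hs ↦ ?_⟩
      rcases le_total s m with h | h
      · rw [hseg s ⟨hs.1, h⟩, segArcSegAngle_of_le hR.le h]
      · rw [harc s ⟨h, hs.2⟩, segArcSegAngle_of_mem hR ⟨h, hLm ▸ hs.2⟩]
    · have hm : m = R * Ω := by
        have := c.hφL ▸ hseg c.L ⟨hmL.le, le_rfl⟩
        field_simp at this
        linarith
      refine ⟨hR, 0, c.L - m, .inr ⟨rfl, by linarith⟩, by rw [hm]; ring, fun s hs ↦ ?_⟩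
      rcases le_total s m with h | h
      · rw [harc s ⟨hs.1, h⟩, segArcSegAngle_of_mem hR ⟨by simpa using hs.1, by simpa [hm] using h⟩,
          sub_zero]
      · rw [hseg s ⟨h, hs.2⟩, segArcSegAngle_of_ge hR hΩ.le (by simpa [hm] using h), hm,
          mul_div_cancel_left₀ _ hR.ne']
  · rintro ⟨hR, d, e, ⟨hd, rfl⟩ | ⟨rfl, he⟩, hL, hφ⟩
    · have hRΩ : 0 < R * Ω := mul_pos hR hΩ
      refine ⟨hR, d, hd, by linarith, .inl ⟨fun s hs ↦ ?_, fun s hs ↦ ?_⟩⟩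
      · rw [hφ ⟨hs.1, by linarith [hs.2]⟩, segArcSegAngle_of_le hR.le hs.2]
      · rw [hφ ⟨by linarith [hs.1], hs.2⟩, segArcSegAngle_of_mem hR ⟨hs.1, by linarith [hs.2]⟩]
    · have hRΩ : 0 < R * Ω := mul_pos hR hΩ
      refine ⟨hR, R * Ω, hRΩ, by linarith, .inr ⟨fun s hs ↦ ?_, fun s hs ↦ ?_⟩⟩
      · rw [hφ ⟨hs.1, by linarith [hs.2]⟩, segArcSegAngle_of_mem hR (by simpa using hs), sub_zero]
      · rw [hφ ⟨by linarith [hs.1], hs.2⟩, segArcSegAngle_of_ge hR hΩ.le (by simpa using hs.1),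
          mul_div_cancel_left₀ _ hR.ne']

end CurveE

namespace IsSegArc

variable {A B α : ℂ} {Ω a b R : ℝ} {c : CurveE A B α Ω}

theorem abs_φ_sub_le (hΩ : 0 < Ω) (h : IsSegArc c R) :
    ∀ s ∈ Icc 0 c.L, ∀ t ∈ Icc 0 c.L, |c.φ s - c.φ t| ≤ 1 / R * |s - t| := by
  obtain ⟨hR, d, e, -, -, hφ⟩ := (c.isSegArc_iff hΩ).1 h
  intro s hs t ht
  rw [hφ hs, hφ ht]
  exact abs_segArcSegAngle_sub_le hR s t

theorem one_div_le (hΩ : 0 < Ω) (h : IsSegArc c R) {K : ℝ}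
    (hK : ∀ s ∈ Icc 0 c.L, ∀ t ∈ Icc 0 c.L, |c.φ s - c.φ t| ≤ K * |s - t|) : 1 / R ≤ K := by
  obtain ⟨hR, d, e, hde, hL, hφ⟩ := (c.isSegArc_iff hΩ).1 h
  have hd := hde.nonneg_left
  have he := hde.nonneg_right
  have hRΩ : 0 < R * Ω := mul_pos hR hΩ
  have hturn := hK d ⟨hd, by linarith⟩ (d + R * Ω) ⟨by linarith, by linarith⟩
  rw [hφ ⟨hd, by linarith⟩, hφ ⟨by linarith, by linarith⟩, segArcSegAngle_of_le hR.le le_rfl,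
    segArcSegAngle_of_ge hR hΩ.le le_rfl, zero_sub, abs_neg, abs_of_pos hΩ, sub_add_cancel_left,
    abs_neg, abs_of_pos hRΩ] at hturn
  rw [one_div, inv_le_iff_one_le_mul₀ hR]
  exact le_of_mul_le_mul_right (by linarith) hΩ

theorem eq_arcRadius_and_eqOn_segArcSegAngle (hα : α ≠ 0) (hΩ : Ω ∈ Ioo 0 Real.pi)
    (hB : B = A + α * segArcSegDisplacement a 0 Ω b) (h : IsSegArc c R) :
    R = arcRadius a b Ω ∧ c.L = max (a - b) 0 + R * Ω + max (b - a) 0 ∧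
      EqOn c.φ (segArcSegAngle (max (a - b) 0) R Ω) (Icc 0 c.L) := by
  obtain ⟨hR, d, e, hde, hL, hφ⟩ := (c.isSegArc_iff hΩ.1).1 h
  have hd := hde.nonneg_left
  have he := hde.nonneg_right
  have hend : B = A + α * segArcSegDisplacement d R Ω e := by
    rw [c.eq_add_integral_of_eqOn hφ, hL, integral_exp_segArcSegAngle hd hR hΩ.1.le he]
  obtain ⟨hsub, hrad⟩ := (segArcSegDisplacement_eq_iff hΩ d R e a 0 b).1
    (mul_left_cancel₀ hα (add_left_cancel (hend.symm.trans hB)))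
  obtain ⟨rfl, rfl⟩ := hde.eq_max_sub hsub
  rw [sub_zero, ← min_sub_sub_left, sub_sub_cancel, sub_zero] at hrad
  exact ⟨(eq_arcRadius_iff hΩ).2 hrad, hL, hφ⟩

end IsSegArc

section

variable {A B α : ℂ} {Ω : ℝ}

theorem exists_isSegArc (hΩ : 0 < Ω) {d e R : ℝ} (hde : ExactlyOnePos d e)
    (hR : 0 < R) (hB : B = A + α * segArcSegDisplacement d R Ω e) :
    ∃ c : CurveE A B α Ω, IsSegArc c R := by
  have hd := hde.nonneg_left
  have he := hde.nonneg_right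
  obtain ⟨c, hL, hφ⟩ := CurveE.exists_of_angle (A := A) (B := B) (α := α) (L := d + R * Ω + e)
    (by positivity) continuous_segArcSegAngle
    (segArcSegAngle_of_le hR.le hd) (segArcSegAngle_of_ge hR hΩ.le (by linarith))
    ((monotone_segArcSegAngle hR.le).monotoneOn _) (fun s _ t _ ↦ abs_segArcSegAngle_sub_le hR s t)
    (by rw [integral_exp_segArcSegAngle hd hR hΩ.le he, hB])
  exact ⟨c, (c.isSegArc_iff hΩ).2 ⟨hR, d, e, hde, hL, hφ ▸ eqOn_refl _ _⟩⟩

variable {a b : ℝ}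

theorem exists_isSegArc_arcRadius (ha : 0 < a) (hb : 0 < b) (hab : a ≠ b)
    (hΩ : Ω ∈ Ioo 0 Real.pi) (hB : B = A + α * segArcSegDisplacement a 0 Ω b) :
    ∃ c : CurveE A B α Ω, IsSegArc c (arcRadius a b Ω) := by
  obtain ⟨d, e, hde, hsub⟩ := ExactlyOnePos.exists_sub_eq (sub_ne_zero.2 hab)
  obtain ⟨-, rfl⟩ := hde.eq_max_sub hsub
  have hrad : (arcRadius a b Ω - 0) * Real.sin (Ω / 2) = (b - max (b - a) 0) * Real.cos (Ω / 2) := by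
    rw [sub_zero, ← min_sub_sub_left, sub_sub_cancel, sub_zero, ← eq_arcRadius_iff hΩ]
  exact exists_isSegArc hΩ.1 hde (arcRadius_pos ha hb hΩ)
    (by rw [hB, (segArcSegDisplacement_eq_iff hΩ _ _ _ _ _ _).2 ⟨hsub, hrad⟩])

end

theorem stmt6_general (O A B : ℂ) (hOA : O ≠ A) (hOB : O ≠ B)
    (hne : ‖O - A‖ ≠ ‖B - O‖)
    (α β : ℂ)
    (hα : α = (O - A) / (‖O - A‖ : ℂ))
    (hβ : β = (B - O) / (‖B - O‖ : ℂ))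
    (Ω : ℝ) (hΩ : Ω ∈ Ioo 0 Real.pi)
    (hang : β = α * Complex.exp ((Ω : ℂ) * Complex.I)) :
    ∃ Ra : ℝ, 0 < Ra ∧
      (∃ c : CurveE A B α Ω, IsSegArc c Ra) ∧
      (∀ c : CurveE A B α Ω, ∀ R : ℝ, IsSegArc c R → R = Ra) ∧
      (∀ c c' : CurveE A B α Ω, ∀ R R' : ℝ, IsSegArc c R → IsSegArc c' R' →
        c.L = c'.L ∧ ∀ s ∈ Icc 0 c.L, c.X s = c'.X s) ∧
      (∀ c : CurveE A B α Ω, IsSegArc c Ra →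
        (∀ s ∈ Icc 0 c.L, ∀ t ∈ Icc 0 c.L, |c.φ s - c.φ t| ≤ (1 / Ra) * |s - t|) ∧
        (∀ K : ℝ, (∀ s ∈ Icc 0 c.L, ∀ t ∈ Icc 0 c.L, |c.φ s - c.φ t| ≤ K * |s - t|) →
          1 / Ra ≤ K)) := by
  have ha : 0 < ‖O - A‖ := norm_pos_iff.2 (sub_ne_zero.2 hOA)
  have hb : 0 < ‖B - O‖ := norm_pos_iff.2 (sub_ne_zero.2 hOB.symm)
  have hα0 : α ≠ 0 := hα ▸ div_ne_zero (sub_ne_zero.2 hOA) (ofReal_ne_zero.2 ha.ne')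
  have hB : B = A + α * segArcSegDisplacement ‖O - A‖ 0 Ω ‖B - O‖ := by
    have hOA' : α * ‖O - A‖ = O - A := by rw [hα, div_mul_cancel₀ _ (ofReal_ne_zero.2 ha.ne')]
    have hBO' : β * ‖B - O‖ = B - O := by rw [hβ, div_mul_cancel₀ _ (ofReal_ne_zero.2 hb.ne')]
    simp only [segArcSegDisplacement, ofReal_zero, zero_div, zero_mul, add_zero]
    linear_combination -hOA' - hBO' + ‖B - O‖ * hang
  have hclass (c : CurveE A B α Ω) (R : ℝ) (h : IsSegArc c R) :=
    h.eq_arcRadius_and_eqOn_segArcSegAngle hα0 hΩ hB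
  refine ⟨arcRadius _ _ Ω, arcRadius_pos ha hb hΩ, exists_isSegArc_arcRadius ha hb hne hΩ hB,
    fun c R h ↦ (hclass c R h).1, ?_,
    fun c h ↦ ⟨h.abs_φ_sub_le hΩ.1, fun K hK ↦ h.one_div_le hΩ.1 hK⟩⟩
  intro c c' R R' h h'
  obtain ⟨rfl, hL, hφ⟩ := hclass c R h
  obtain ⟨rfl, hL', hφ'⟩ := hclass c' R' h'
  have hLL : c.L = c'.L := hL.trans hL'.symm
  exact ⟨hLL, c.X_eqOn_of_φ_eqOn c' hLL fun s hs ↦ (hφ hs).trans (hφ' (hLL ▸ hs)).symm⟩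

/-- Nonsymmetric case (`OA ≠ OB`): there is a unique curve in 𝓔 made of one circular
arc of radius `R_a > 0` (of length in `(0, R_a π)`) and one line segment of positive
length; `R_a` depends only on `O, A, B`, and the maximal curvature of this curve is
exactly `1/R_a`. -/
theorem stmt6 (O A B : ℂ) (hOA : O ≠ A) (hOB : O ≠ B) (hAB : A ≠ B)
    (hne : ‖O - A‖ ≠ ‖B - O‖)
    (α β : ℂ)
    (hα : α = (O - A) / (‖O - A‖ : ℂ))
    (hβ : β = (B - O) / (‖B - O‖ : ℂ))
    (Ω : ℝ) (hΩ : Ω ∈ Ioo 0 Real.pi)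
    (hang : β = α * Complex.exp ((Ω : ℂ) * Complex.I)) :
    ∃ Ra : ℝ, 0 < Ra ∧
      (∃ c : CurveE A B α Ω, IsSegArc c Ra) ∧
      (∀ c : CurveE A B α Ω, ∀ R : ℝ, IsSegArc c R → R = Ra) ∧
      (∀ c c' : CurveE A B α Ω, ∀ R R' : ℝ, IsSegArc c R → IsSegArc c' R' →
        c.L = c'.L ∧ ∀ s ∈ Icc 0 c.L, c.X s = c'.X s) ∧
      (∀ c : CurveE A B α Ω, IsSegArc c Ra →
        (∀ s ∈ Icc 0 c.L, ∀ t ∈ Icc 0 c.L, |c.φ s - c.φ t| ≤ (1 / Ra) * |s - t|) ∧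
        (∀ K : ℝ, (∀ s ∈ Icc 0 c.L, ∀ t ∈ Icc 0 c.L, |c.φ s - c.φ t| ≤ K * |s - t|) →
          1 / Ra ≤ K)) :=
  stmt6_general O A B hOA hOB hne α β hα hβ Ω hΩ hang
end

section
/- Fix p ≥ 2, θ₀ = Ω/p ∈ (0, π/p], and b ∈ ℂ. Let 𝓔_p = { R ∈ (ℝ₊*)^p : Σ_{k=0}^{p−1} i(1 − e^{iθ₀}) e^{ikθ₀} R_k = b }. If 𝓔_p is nonempty, then the function F(R) = min_{0 ≤ k ≤ p−1} R_k attains its maximum on 𝓔_p; i.e., there exists R* ∈ 𝓔_p with F(R*) = sup_{R ∈ 𝓔_p} F(R). -/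
/-! The imaginary part of the constraint is `∑ k, (cos (kθ₀) - cos ((k+1)θ₀)) R_k = Im b`, and every
weight is positive because `0 ≤ kθ₀ < (k+1)θ₀ ≤ pθ₀ = Ω < π`. Hence the closure of `𝓔_p` in the
closed orthant is compact, and the continuous function `min_k R_k` attains its maximum there. This
maximum is at least `min_k R_k > 0` for any `R ∈ 𝓔_p`, so the maximizer has positive coordinates
and lies in `𝓔_p` itself. -/

open Complex in
theorem Complex.im_I_mul_one_sub_exp_mul_exp_mul (θ x r : ℝ) :
    (I * (1 - exp (θ * I)) * exp ((x * θ : ℝ) * I) * r).im =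
      (Real.cos (x * θ) - Real.cos ((x + 1) * θ)) * r := by
  have h : I * (1 - exp (θ * I)) * exp ((x * θ : ℝ) * I) * r =
      I * (exp ((x * θ : ℝ) * I) - exp (((x + 1) * θ : ℝ) * I)) * r := by
    rw [show (((x + 1) * θ : ℝ) : ℂ) * I = (x * θ : ℝ) * I + θ * I by push_cast; ring, exp_add]
    ring
  rw [h]
  simp only [mul_im, mul_re, I_re, I_im, sub_re, sub_im, ofReal_re, ofReal_im,
    exp_ofReal_mul_I_re, exp_ofReal_mul_I_im]
  ring

theorem Real.cos_add_one_mul_lt_cos_mul {θ x : ℝ} (hθ : 0 < θ) (hx : 0 ≤ x)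
    (hπ : (x + 1) * θ ≤ Real.pi) : cos ((x + 1) * θ) < cos (x * θ) :=
  cos_lt_cos_of_nonneg_of_le_pi (by positivity) hπ (by nlinarith)

section

variable {ι : Type*} [Fintype ι]

theorem isCompact_setOf_nonneg_weightedSum_eq {c : ι → ℝ} (hc : ∀ k, 0 < c k) (m : ℝ) :
    IsCompact {R : ι → ℝ | (∀ k, 0 ≤ R k) ∧ ∑ k, c k * R k = m} := by
  refine (isCompact_univ_pi fun k => isCompact_Icc (a := 0) (b := m / c k)).of_isClosed_subset
    ?_ ?_
  · exact isClosed_Ici.inter (isClosed_eq (by fun_prop) continuous_const)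
  · rintro R ⟨hR, rfl⟩ j -
    refine ⟨hR j, (le_div_iff₀ (hc j)).2 ?_⟩
    rw [mul_comm]
    exact Finset.single_le_sum (fun k _ => mul_nonneg (hc k).le (hR k)) (Finset.mem_univ j)

theorem IsCompact.exists_forall_iInf_le_of_pos [Nonempty ι] {K : Set (ι → ℝ)} (hK : IsCompact K)
    (hne : {R ∈ K | ∀ k, 0 < R k}.Nonempty) :
    ∃ R' ∈ {R ∈ K | ∀ k, 0 < R k}, ∀ R ∈ {R ∈ K | ∀ k, 0 < R k}, ⨅ k, R k ≤ ⨅ k, R' k := by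
  obtain ⟨R₀, hR₀K, hR₀⟩ := hne
  have husc : UpperSemicontinuous fun R : ι → ℝ => ⨅ k, R k :=
    upperSemicontinuous_ciInf (fun _ => (Set.finite_range _).bddBelow)
      fun k => (continuous_apply k).upperSemicontinuous
  obtain ⟨R', hR'K, hmax⟩ := (husc.upperSemicontinuousOn K).exists_isMaxOn ⟨R₀, hR₀K⟩ hK
  have hmin₀ : 0 < ⨅ k, R₀ k := by
    rw [← Finset.inf'_univ_eq_ciInf, Finset.lt_inf'_iff]
    exact fun k _ => hR₀ k
  refine ⟨R', ⟨hR'K, fun k => ?_⟩, fun R hR => hmax hR.1⟩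
  calc 0 < ⨅ k, R₀ k := hmin₀
    _ ≤ ⨅ k, R' k := hmax hR₀K
    _ ≤ R' k := ciInf_le (Set.finite_range _).bddBelow k

end

/-- The discrete class `𝓔_p` of `p`-tuples of positive radii whose `p` arcs of common
central angle `θ₀ = Ω/p` join `0` to `b`: if nonempty, the function
`F(R) = min_k R_k` attains its maximum on `𝓔_p`. -/
theorem stmt10 (p : ℕ) (hp : 2 ≤ p) (Ω : ℝ) (hΩ : Ω ∈ Set.Ioo 0 Real.pi)
    (θ₀ : ℝ) (hθ : θ₀ = Ω / p) (b : ℂ)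
    (S : Set (Fin p → ℝ))
    (hS : S = {R | (∀ k, 0 < R k) ∧
      ∑ k : Fin p,
        Complex.I * (1 - Complex.exp ((θ₀ : ℂ) * Complex.I)) *
          Complex.exp ((((k : ℕ) : ℝ) * θ₀ : ℝ) * Complex.I) * (R k : ℂ) = b})
    (hne : S.Nonempty) :
    ∃ Rstar ∈ S, ∀ R ∈ S, (⨅ k, R k) ≤ ⨅ k, Rstar k := by
  have : Nonempty (Fin p) := ⟨⟨0, by omega⟩⟩
  set G : (Fin p → ℝ) → ℂ := fun R => ∑ k : Fin p,
    Complex.I * (1 - Complex.exp ((θ₀ : ℂ) * Complex.I)) *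
      Complex.exp ((((k : ℕ) : ℝ) * θ₀ : ℝ) * Complex.I) * (R k : ℂ)
  set c : Fin p → ℝ := fun k => Real.cos ((k : ℕ) * θ₀) - Real.cos (((k : ℕ) + 1) * θ₀)
  have hG : ∀ R, (G R).im = ∑ k, c k * R k := fun R => by
    simp only [G, Complex.im_sum, Complex.im_I_mul_one_sub_exp_mul_exp_mul, c]
  have hθ₀ : 0 < θ₀ := hθ ▸ div_pos hΩ.1 (by positivity)
  have hc : ∀ k, 0 < c k := fun k =>
    sub_pos.2 <| Real.cos_add_one_mul_lt_cos_mul hθ₀ (Nat.cast_nonneg _) <|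
      calc (((k : ℕ) : ℝ) + 1) * θ₀ ≤ p * θ₀ := by gcongr; exact_mod_cast k.isLt
        _ = Ω := by rw [hθ]; field_simp
        _ ≤ Real.pi := hΩ.2.le
  set K : Set (Fin p → ℝ) := {R | (∀ k, 0 ≤ R k) ∧ G R = b}
  have hK : IsCompact K :=
    (isCompact_setOf_nonneg_weightedSum_eq hc b.im).of_isClosed_subset
      (isClosed_Ici.inter (isClosed_eq (by fun_prop) continuous_const))
      fun R ⟨hR, hGR⟩ => ⟨hR, by rw [← hG, hGR]⟩
  have hSK : S = {R ∈ K | ∀ k, 0 < R k} := by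
    ext R
    simp only [hS, K, Set.mem_ofPred_eq]
    exact ⟨fun ⟨hR, hGR⟩ => ⟨⟨fun k => (hR k).le, hGR⟩, hR⟩, fun ⟨⟨_, hGR⟩, hR⟩ => ⟨hR, hGR⟩⟩
  rw [hSK] at hne ⊢
  exact hK.exists_forall_iInf_le_of_pos hne
end

section
/- Let X : [0,L] → ℝ² be a unit-speed curve in the class 𝓔 (from A to B with initial tangent α = (O−A)/OA toward a point O, final tangent β = (B−O)/OB, nondecreasing tangent angle φ with φ(0)=0, φ(L)=Ω ∈ (0,π)). For s with φ(s) ∈ (0,π), let Q(s) be the intersection of the line through A directed by α with the tangent line to X at X(s), and write AQ(s) = u(s)α, Q(s)X(s) = v(s)X'(s). Then u(s) = x(s) − y(s) cos φ(s)/sin φ(s) and v(s) = y(s)/sin φ(s) (coordinates in the frame (A, α, k)), u is nondecreasing where defined, u ≥ 0, and at s = L one has u(L) > 0 and v(L) > 0. In particular O ≠ A, O ≠ B, and −AO→ = u₀ α, OB→ = v₀ β with u₀, v₀ > 0. -/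
/-!
In the frame `(A, α, k)` the tangent line at `X(s)` meets the first axis at abscissa
`u(s) = x(s) - y(s) cot φ(s)`. The cross product of a chord `X(s) - X(r)`, `r ≤ s`, with the
tangent direction at `X(s)` is `∫_r^s sin (φ(s) - φ(t)) dt ≥ 0`, as `0 ≤ φ(s) - φ(t) ≤ π`.
Dividing by `sin φ(s)`, and using that `cot` decreases on `(0, π)` while `y ≥ 0`, shows that `u`
is nondecreasing; the chord from `A = X(0)` gives `u ≥ 0`. At `s = L` the integrand is
continuous and equals `sin Ω > 0` at `t = 0`, so `u(L) > 0`; likewise `y(L) = ∫ sin φ > 0`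
because `sin φ(L) > 0`, so `v(L) > 0`.
-/

open Set Real MeasureTheory

lemma sin_sub_nonneg_of_monotoneOn {φ : ℝ → ℝ} {S : Set ℝ} {s t : ℝ}
    (hmono : MonotoneOn φ S) (hrange : MapsTo φ S (Icc 0 π)) (ht : t ∈ S) (hs : s ∈ S)
    (hts : t ≤ s) : 0 ≤ sin (φ s - φ t) :=
  sin_nonneg_of_nonneg_of_le_pi (sub_nonneg.2 (hmono ht hs hts))
    (by linarith [(hrange ht).1, (hrange hs).2])

lemma antitoneOn_cos_div_sin : AntitoneOn (fun θ => cos θ / sin θ) (Ioo 0 π) := by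
  intro a ha b hb hab
  rw [div_le_div_iff₀ (sin_pos_of_mem_Ioo hb) (sin_pos_of_mem_Ioo ha)]
  have : 0 ≤ sin (b - a) := sin_nonneg_of_nonneg_of_le_pi (by linarith) (by linarith [ha.1, hb.2])
  rw [sin_sub] at this
  linarith

lemma sub_mul_cos_div_sin_eq {X Y θ : ℝ} (h : sin θ ≠ 0) :
    X - Y * cos θ / sin θ = (X * sin θ - Y * cos θ) / sin θ := by
  field_simp

lemma sub_mul_cos_div_sin_le {X₁ Y₁ X₂ Y₂ θ : ℝ} (hθ : 0 < sin θ)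
    (h : 0 ≤ (X₂ - X₁) * sin θ - (Y₂ - Y₁) * cos θ) :
    X₁ - Y₁ * cos θ / sin θ ≤ X₂ - Y₂ * cos θ / sin θ := by
  have hdiff : X₂ - Y₂ * cos θ / sin θ - (X₁ - Y₁ * cos θ / sin θ) =
      ((X₂ - X₁) * sin θ - (Y₂ - Y₁) * cos θ) / sin θ := by
    field_simp
    ring
  rw [← sub_nonneg, hdiff]
  exact div_nonneg h hθ.le

lemma intervalIntegral.integral_sin_sub {φ : ℝ → ℝ} {a b : ℝ}
    (hφ : ContinuousOn φ (uIcc a b)) (θ : ℝ) :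
    ∫ t in a..b, sin (θ - φ t) =
      (∫ t in a..b, cos (φ t)) * sin θ - (∫ t in a..b, sin (φ t)) * cos θ := by
  have hcos : IntervalIntegrable (fun t => cos (φ t)) volume a b :=
    (continuous_cos.comp_continuousOn hφ).intervalIntegrable
  have hsin : IntervalIntegrable (fun t => sin (φ t)) volume a b :=
    (continuous_sin.comp_continuousOn hφ).intervalIntegrable
  rw [← intervalIntegral.integral_mul_const, ← intervalIntegral.integral_mul_const,
    ← intervalIntegral.integral_sub (hcos.mul_const _) (hsin.mul_const _)]
  congr 1 with t
  rw [sin_sub]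
  ring

section TangentAbscissa

variable {L r s : ℝ} {φ x y : ℝ → ℝ}

lemma cross_chord_tangent_eq (hφ : ContinuousOn φ (Icc 0 L))
    (hx : x = fun s => ∫ t in (0:ℝ)..s, cos (φ t))
    (hy : y = fun s => ∫ t in (0:ℝ)..s, sin (φ t))
    (hr : r ∈ Icc 0 L) (hs : s ∈ Icc 0 L) (θ : ℝ) :
    (x s - x r) * sin θ - (y s - y r) * cos θ = ∫ t in r..s, sin (θ - φ t) := by
  have hint : ∀ {g : ℝ → ℝ}, Continuous g → ∀ {a}, a ∈ Icc 0 L →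
      IntervalIntegrable (fun t => g (φ t)) volume 0 a := fun hg _ ha =>
    (hg.comp_continuousOn
      (hφ.mono (uIcc_subset_Icc (left_mem_Icc.2 (ha.1.trans ha.2)) ha))).intervalIntegrable
  subst hx hy
  rw [intervalIntegral.integral_sin_sub (hφ.mono (uIcc_subset_Icc hr hs)),
    intervalIntegral.integral_interval_sub_left (hint continuous_cos hs) (hint continuous_cos hr),
    intervalIntegral.integral_interval_sub_left (hint continuous_sin hs) (hint continuous_sin hr)]

lemma cross_chord_tangent_nonneg (hφ : ContinuousOn φ (Icc 0 L)) (hmono : MonotoneOn φ (Icc 0 L))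
    (hrange : MapsTo φ (Icc 0 L) (Icc 0 π))
    (hx : x = fun s => ∫ t in (0:ℝ)..s, cos (φ t))
    (hy : y = fun s => ∫ t in (0:ℝ)..s, sin (φ t))
    (hr : r ∈ Icc 0 L) (hs : s ∈ Icc 0 L) (hrs : r ≤ s) :
    0 ≤ (x s - x r) * sin (φ s) - (y s - y r) * cos (φ s) := by
  rw [cross_chord_tangent_eq hφ hx hy hr hs]
  exact intervalIntegral.integral_nonneg hrs fun t ht =>
    sin_sub_nonneg_of_monotoneOn hmono hrange ⟨hr.1.trans ht.1, ht.2.trans hs.2⟩ hs ht.2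

lemma curve_y_nonneg (hrange : MapsTo φ (Icc 0 L) (Icc 0 π))
    (hy : y = fun s => ∫ t in (0:ℝ)..s, sin (φ t)) (hs : s ∈ Icc 0 L) : 0 ≤ y s := by
  subst hy
  exact intervalIntegral.integral_nonneg hs.1 fun t ht =>
    sin_nonneg_of_mem_Icc (hrange ⟨ht.1, ht.2.trans hs.2⟩)

lemma curve_y_pos (hL : 0 < L) (hφ : ContinuousOn φ (Icc 0 L))
    (hrange : MapsTo φ (Icc 0 L) (Icc 0 π)) (hφL : φ L ∈ Ioo 0 π)
    (hy : y = fun s => ∫ t in (0:ℝ)..s, sin (φ t)) : 0 < y L := by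
  subst hy
  exact intervalIntegral.integral_pos hL (continuous_sin.comp_continuousOn hφ)
    (fun t ht => sin_nonneg_of_mem_Icc (hrange (Ioc_subset_Icc_self ht)))
    ⟨L, right_mem_Icc.2 hL.le, sin_pos_of_mem_Ioo hφL⟩

lemma monotoneOn_tangentAbscissa (hφ : ContinuousOn φ (Icc 0 L))
    (hmono : MonotoneOn φ (Icc 0 L)) (hrange : MapsTo φ (Icc 0 L) (Ico 0 π))
    (hx : x = fun s => ∫ t in (0:ℝ)..s, cos (φ t))
    (hy : y = fun s => ∫ t in (0:ℝ)..s, sin (φ t)) :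
    MonotoneOn (fun s => x s - y s * cos (φ s) / sin (φ s)) {s | s ∈ Icc 0 L ∧ 0 < φ s} := by
  rintro s₁ ⟨hs₁, hφ₁⟩ s₂ ⟨hs₂, hφ₂⟩ h12
  have hrange' : MapsTo φ (Icc 0 L) (Icc 0 π) := fun s hs => Ico_subset_Icc_self (hrange hs)
  have hcot := antitoneOn_cos_div_sin ⟨hφ₁, (hrange hs₁).2⟩ ⟨hφ₂, (hrange hs₂).2⟩
    (hmono hs₁ hs₂ h12)
  have hy₁ := curve_y_nonneg hrange' hy hs₁
  calc x s₁ - y s₁ * cos (φ s₁) / sin (φ s₁)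
      ≤ x s₁ - y s₁ * cos (φ s₂) / sin (φ s₂) := by
        simp only [mul_div_assoc]; gcongr
    _ ≤ x s₂ - y s₂ * cos (φ s₂) / sin (φ s₂) :=
        sub_mul_cos_div_sin_le (sin_pos_of_pos_of_lt_pi hφ₂ (hrange hs₂).2)
          (cross_chord_tangent_nonneg hφ hmono hrange' hx hy hs₁ hs₂ h12)

lemma tangentAbscissa_nonneg (hφ : ContinuousOn φ (Icc 0 L))
    (hmono : MonotoneOn φ (Icc 0 L)) (hrange : MapsTo φ (Icc 0 L) (Ico 0 π))
    (hx : x = fun s => ∫ t in (0:ℝ)..s, cos (φ t))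
    (hy : y = fun s => ∫ t in (0:ℝ)..s, sin (φ t))
    (hs : s ∈ Icc 0 L) (hφs : 0 < φ s) : 0 ≤ x s - y s * cos (φ s) / sin (φ s) := by
  have hcross := cross_chord_tangent_nonneg hφ hmono
    (fun s hs => Ico_subset_Icc_self (hrange hs)) hx hy ⟨le_rfl, hs.1.trans hs.2⟩ hs hs.1
  simp only [hx, hy, intervalIntegral.integral_same, sub_zero] at hcross
  rw [sub_mul_cos_div_sin_eq (sin_pos_of_pos_of_lt_pi hφs (hrange hs).2).ne', hx, hy]
  exact div_nonneg hcross (sin_nonneg_of_mem_Icc (Ico_subset_Icc_self (hrange hs)))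

lemma tangentAbscissa_pos (hL : 0 < L) (hφ : ContinuousOn φ (Icc 0 L))
    (hmono : MonotoneOn φ (Icc 0 L)) (hrange : MapsTo φ (Icc 0 L) (Icc 0 π))
    (hφ0 : φ 0 = 0) (hφL : φ L ∈ Ioo 0 π)
    (hx : x = fun s => ∫ t in (0:ℝ)..s, cos (φ t))
    (hy : y = fun s => ∫ t in (0:ℝ)..s, sin (φ t)) :
    0 < x L - y L * cos (φ L) / sin (φ L) := by
  have h0 : (0:ℝ) ∈ Icc 0 L := left_mem_Icc.2 hL.le
  have hLL : L ∈ Icc 0 L := right_mem_Icc.2 hL.le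
  have hcross := cross_chord_tangent_eq hφ hx hy h0 hLL (φ L)
  simp only [hx, hy, intervalIntegral.integral_same, sub_zero] at hcross
  rw [sub_mul_cos_div_sin_eq (sin_pos_of_mem_Ioo hφL).ne', hx, hy, hcross]
  refine div_pos (intervalIntegral.integral_pos hL
    (continuous_sin.comp_continuousOn (continuousOn_const.sub hφ))
    (fun t ht => sin_sub_nonneg_of_monotoneOn hmono hrange (Ioc_subset_Icc_self ht) hLL ht.2)
    ⟨0, h0, ?_⟩) (sin_pos_of_mem_Ioo hφL)
  simpa [hφ0] using sin_pos_of_mem_Ioo hφL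

end TangentAbscissa

/-- Lemma A: in the frame `(A, α, k)` (so `A = (0,0)`, `α = (1,0)`,
`x' = cos φ`, `y' = sin φ`), for a curve of 𝓔 the abscissa `u(s)` of the
intersection `Q(s)` of the tangent line at `X(s)` with the line `(A, α)`, and the
parameter `v(s)` with `Q(s)X(s) = v(s)X'(s)`, are given by
`u = x − y cos φ / sin φ`, `v = y / sin φ`; `u` is nondecreasing where defined,
nonnegative, and `u(L) > 0`, `v(L) > 0`. Hence the point `O = Q(L) = (u(L), 0)`
(intersection of the two endpoint tangent lines) is distinct from `A` and `B`, with
`AO = u(L)·α` and `OB = v(L)·(cos Ω, sin Ω)`, `u(L), v(L) > 0`. -/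
theorem stmt12 (L Ω : ℝ) (hL : 0 < L) (hΩ : Ω ∈ Ioo 0 Real.pi)
    (φ x y : ℝ → ℝ)
    (hφc : ContinuousOn φ (Icc 0 L))
    (hmono : MonotoneOn φ (Icc 0 L))
    (hφ0 : φ 0 = 0) (hφL : φ L = Ω)
    (hx : x = fun s => ∫ u in (0:ℝ)..s, Real.cos (φ u))
    (hy : y = fun s => ∫ u in (0:ℝ)..s, Real.sin (φ u))
    (u v : ℝ → ℝ)
    (hu : u = fun s => x s - y s * Real.cos (φ s) / Real.sin (φ s))
    (hv : v = fun s => y s / Real.sin (φ s)) :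
    MonotoneOn u {s | s ∈ Icc 0 L ∧ 0 < φ s} ∧
    (∀ s ∈ Icc 0 L, 0 < φ s → 0 ≤ u s) ∧
    0 < u L ∧ 0 < v L ∧
    ((u L, (0:ℝ)) ≠ ((0:ℝ), (0:ℝ))) ∧
    ((u L, (0:ℝ)) ≠ (x L, y L)) ∧
    (x L, y L) - (u L, (0:ℝ)) = v L • (Real.cos Ω, Real.sin Ω) := by
  subst hu hv hφL
  have hLL : L ∈ Icc 0 L := right_mem_Icc.2 hL.le
  have hrange : MapsTo φ (Icc 0 L) (Ico 0 π) := fun s hs =>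
    ⟨hφ0 ▸ hmono (left_mem_Icc.2 hL.le) hs hs.1, (hmono hs hLL hs.2).trans_lt hΩ.2⟩
  have hrange' : MapsTo φ (Icc 0 L) (Icc 0 π) := fun s hs => Ico_subset_Icc_self (hrange hs)
  have huL := tangentAbscissa_pos hL hφc hmono hrange' hφ0 hΩ hx hy
  have hyL := curve_y_pos hL hφc hrange' hΩ hy
  have hsin := sin_pos_of_mem_Ioo hΩ
  refine ⟨monotoneOn_tangentAbscissa hφc hmono hrange hx hy,
    fun s hs hφs => tangentAbscissa_nonneg hφc hmono hrange hx hy hs hφs, huL,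
    div_pos hyL hsin, by simp [huL.ne'], fun h => hyL.ne (congrArg Prod.snd h), ?_⟩
  ext <;> simp only [Prod.mk_sub_mk, sub_sub_cancel, sub_zero, Prod.smul_mk, smul_eq_mul] <;>
    field_simp
end

section
/- Existence of an optimal curve: let O, A, B be pairwise distinct, α = (O−A)/OA, β = (B−O)/OB, Ω ∈ (0,π) the oriented angle from α to β, and let 𝓔 be the (nonempty) set of unit-speed W^{2,∞} curves from A to B with tangents α, β at the endpoints and nondecreasing tangent angle. Then δ₀ = inf_{Z ∈ 𝓔} ‖ ‖Z''‖ ‖_{L^∞(0,L(Z))} is strictly positive and is attained: there exists X ∈ 𝓔 with ‖ ‖X''‖ ‖_{L^∞} = δ₀. -/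
/-!
Write `a = |OA|`, `b = |OB|`, so that `B - A = α (a + b e^{iΩ})`. For a curve of 𝓔 whose
tangent angle `φ` is `κ`-Lipschitz, the components of `∫ e^{iφ} = a + b e^{iΩ}` give
`∫ sin φ = b sin Ω` and `∫ sin (Ω - φ) = a sin Ω`, while `|(cos φ)'| ≤ κ sin φ` almost everywhere
gives `1 - cos Ω ≤ κ ∫ sin φ` and `1 - cos Ω ≤ κ ∫ sin (Ω - φ)`. Hence every curve has maximal
curvature at least `(1 - cos Ω) / (min a b · sin Ω) = tan (Ω / 2) / min a b`. This bound is
attained by the curve that runs along `OA`, turns along the circular arc of radius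
`min a b / tan (Ω / 2)` tangent to both legs at distance `min a b` from `O`, and leaves along
`OB`; so `δ₀ = tan (Ω / 2) / min a b`.
-/

open Set

/-- The maximal curvature `‖‖X''‖‖_{L^∞}` of a curve of 𝓔, as the least Lipschitz
constant of its tangent angle. -/
noncomputable def maxCurv {A B α : ℂ} {Ω : ℝ} (c : CurveE A B α Ω) : ℝ :=
  sInf {K : ℝ | 0 ≤ K ∧
    ∀ s ∈ Icc 0 c.L, ∀ t ∈ Icc 0 c.L, |c.φ s - c.φ t| ≤ K * |s - t|}

open MeasureTheory
open scoped NNReal Real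
open Real (cos sin tan)
open Complex (exp I)

theorem Real.cos_half_pos {x : ℝ} (hx : x ∈ Ioo (-π) π) : 0 < cos (x / 2) :=
  Real.cos_pos_of_mem_Ioo ⟨by linarith [hx.1], by linarith [hx.2]⟩

theorem Real.tan_half_pos {x : ℝ} (hx : x ∈ Ioo 0 π) : 0 < tan (x / 2) :=
  Real.tan_pos_of_pos_of_lt_pi_div_two (by linarith [hx.1]) (by linarith [hx.2])

theorem exp_mul_I_sub_one_eq_tan_half {x : ℝ} (hx : cos (x / 2) ≠ 0) :
    exp (x * I) - 1 = tan (x / 2) * I * (1 + exp (x * I)) := by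
  have hx2 : x = 2 * (x / 2) := by ring
  apply Complex.ext <;>
    simp only [Complex.sub_re, Complex.sub_im, Complex.mul_re, Complex.mul_im, Complex.add_re,
      Complex.add_im, Complex.I_re, Complex.I_im, Complex.ofReal_re, Complex.ofReal_im,
      Complex.exp_ofReal_mul_I_re, Complex.exp_ofReal_mul_I_im, Complex.one_re, Complex.one_im] <;>
    rw [hx2, Real.cos_two_mul, Real.sin_two_mul, Real.tan_eq_sin_div_cos] <;>
    field_simp
  · linear_combination (2 * cos (x / 2)) * Real.sin_sq_add_cos_sq (x / 2)
  · ring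

theorem Real.tan_half_mul_sin {x : ℝ} (hx : cos (x / 2) ≠ 0) :
    tan (x / 2) * sin x = 1 - cos x := by
  have := congrArg Complex.re (exp_mul_I_sub_one_eq_tan_half hx)
  simp only [Complex.sub_re, Complex.mul_re, Complex.add_re, Complex.add_im, Complex.I_re,
    Complex.I_im, Complex.ofReal_re, Complex.ofReal_im, Complex.mul_im, Complex.one_re,
    Complex.one_im, Complex.exp_ofReal_mul_I_re, Complex.exp_ofReal_mul_I_im] at this
  linarith

theorem abs_cos_sub_cos_le_mul_integral_abs_sin {ψ : ℝ → ℝ} {a b : ℝ} {K : ℝ≥0} (hab : a ≤ b)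
    (hψ : LipschitzOnWith K ψ (Icc a b)) :
    |cos (ψ b) - cos (ψ a)| ≤ K * ∫ s in a..b, |sin (ψ s)| := by
  rw [← uIcc_of_le hab] at hψ
  have hcos : AbsolutelyContinuousOnInterval (fun s => cos (ψ s)) a b :=
    (Real.lipschitzWith_cos.comp_lipschitzOnWith hψ).absolutelyContinuousOnInterval
  have hsin : IntervalIntegrable (fun s => |sin (ψ s)|) volume a b :=
    (Real.continuous_sin.abs.comp_continuousOn hψ.continuousOn).intervalIntegrable
  rw [← hcos.integral_deriv_eq_sub, ← intervalIntegral.integral_const_mul]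
  refine intervalIntegral.norm_integral_le_of_norm_le (f := deriv fun s => cos (ψ s)) hab ?_
    (hsin.const_mul _)
  filter_upwards [hψ.absolutelyContinuousOnInterval.ae_differentiableAt, Measure.ae_ne volume b]
    with s hdiff hsb hs
  rw [uIcc_of_le hab] at hdiff hψ
  have hs' : s ∈ Ioo a b := ⟨hs.1, lt_of_le_of_ne hs.2 hsb⟩
  have hψ' : ‖deriv ψ s‖ ≤ K := norm_deriv_le_of_lipschitzOn (Icc_mem_nhds hs'.1 hs'.2) hψ
  rw [(hdiff (Ioo_subset_Icc_self hs')).hasDerivAt.cos.deriv, norm_mul, norm_neg,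
    Real.norm_eq_abs, mul_comm]
  exact mul_le_mul_of_nonneg_right hψ' (abs_nonneg _)

namespace CurveE

variable {A B α : ℂ} {Ω : ℝ} (c : CurveE A B α Ω)

theorem exists_nonneg_lipschitz_bound :
    ∃ K, 0 ≤ K ∧ ∀ s ∈ Icc 0 c.L, ∀ t ∈ Icc 0 c.L, |c.φ s - c.φ t| ≤ K * |s - t| := by
  obtain ⟨K, hK⟩ := c.hW2
  exact ⟨max K 0, le_max_right _ _, fun s hs t ht =>
    (hK s hs t ht).trans (mul_le_mul_of_nonneg_right (le_max_left _ _) (abs_nonneg _))⟩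

theorem maxCurv_nonneg : 0 ≤ maxCurv c :=
  le_csInf c.exists_nonneg_lipschitz_bound fun _ hK => hK.1

theorem maxCurv_le {K : ℝ} (hK : 0 ≤ K)
    (h : ∀ s ∈ Icc 0 c.L, ∀ t ∈ Icc 0 c.L, |c.φ s - c.φ t| ≤ K * |s - t|) : maxCurv c ≤ K :=
  csInf_le ⟨0, fun _ hK => hK.1⟩ ⟨hK, h⟩

theorem abs_φ_sub_φ_le_maxCurv_mul {s t : ℝ} (hs : s ∈ Icc 0 c.L) (ht : t ∈ Icc 0 c.L) :
    |c.φ s - c.φ t| ≤ maxCurv c * |s - t| := by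
  rcases eq_or_ne s t with rfl | hst
  · simp
  have hpos : 0 < |s - t| := abs_pos.2 (sub_ne_zero.2 hst)
  rw [← div_le_iff₀ hpos]
  exact le_csInf c.exists_nonneg_lipschitz_bound fun K hK => (div_le_iff₀ hpos).2 (hK.2 s hs t ht)

theorem lipschitzOnWith_maxCurv : LipschitzOnWith (maxCurv c).toNNReal c.φ (Icc 0 c.L) :=
  LipschitzOnWith.of_dist_le_mul fun s hs t ht => by
    simpa [Real.dist_eq, c.maxCurv_nonneg] using c.abs_φ_sub_φ_le_maxCurv_mul hs ht

theorem φ_mem_Icc {s : ℝ} (hs : s ∈ Icc 0 c.L) : c.φ s ∈ Icc 0 Ω := by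
  have h0 := c.hmono (left_mem_Icc.2 c.hL.le) hs hs.1
  have hL := c.hmono hs (right_mem_Icc.2 c.hL.le) hs.2
  rw [c.hφ0] at h0
  rw [c.hφL] at hL
  exact ⟨h0, hL⟩

theorem intervalIntegrable_exp_φ_mul_I :
    IntervalIntegrable (fun s => exp (c.φ s * I)) volume 0 c.L := by
  have := c.hcont
  exact ContinuousOn.intervalIntegrable_of_Icc c.hL.le (by fun_prop)

theorem integral_exp_φ_mul_I {a b : ℝ} (hα : α ≠ 0) (hBA : B - A = α * (a + b * exp (Ω * I))) :
    ∫ s in 0..c.L, exp (c.φ s * I) = a + b * exp (Ω * I) := by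
  have hderiv (s : ℝ) (hs : s ∈ Ioo 0 c.L) :
      HasDerivWithinAt c.X (α * exp (c.φ s * I)) (Ioi s) s :=
    ((c.hderiv s (Ioo_subset_Icc_self hs)).hasDerivAt (Icc_mem_nhds hs.1 hs.2)).hasDerivWithinAt
  rw [← mul_right_inj' hα, ← hBA, ← intervalIntegral.integral_const_mul,
    intervalIntegral.integral_eq_sub_of_hasDeriv_right_of_le c.hL.le
      (fun s hs => (c.hderiv s hs).continuousWithinAt) hderiv
      (c.intervalIntegrable_exp_φ_mul_I.const_mul α), c.hXL, c.hX0]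

theorem integral_sin_φ {a b : ℝ} (hα : α ≠ 0) (hBA : B - A = α * (a + b * exp (Ω * I))) :
    ∫ s in 0..c.L, sin (c.φ s) = b * sin Ω := by
  have := congrArg Complex.im (c.integral_exp_φ_mul_I hα hBA)
  rw [← Complex.imCLM_apply, ← Complex.imCLM.intervalIntegral_comp_comm
    c.intervalIntegrable_exp_φ_mul_I] at this
  simpa [Complex.exp_ofReal_mul_I_im] using this

theorem integral_cos_φ {a b : ℝ} (hα : α ≠ 0) (hBA : B - A = α * (a + b * exp (Ω * I))) :
    ∫ s in 0..c.L, cos (c.φ s) = a + b * cos Ω := by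
  have := congrArg Complex.re (c.integral_exp_φ_mul_I hα hBA)
  rw [← Complex.reCLM_apply, ← Complex.reCLM.intervalIntegral_comp_comm
    c.intervalIntegrable_exp_φ_mul_I] at this
  simpa [Complex.exp_ofReal_mul_I_re] using this

theorem integral_sin_sub_φ {a b : ℝ} (hα : α ≠ 0) (hBA : B - A = α * (a + b * exp (Ω * I))) :
    ∫ s in 0..c.L, sin (Ω - c.φ s) = a * sin Ω := by
  have hφ := c.hcont
  simp_rw [Real.sin_sub]
  rw [intervalIntegral.integral_sub, intervalIntegral.integral_const_mul,
    intervalIntegral.integral_const_mul, c.integral_cos_φ hα hBA, c.integral_sin_φ hα hBA]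
  · ring
  all_goals exact ContinuousOn.intervalIntegrable_of_Icc c.hL.le (by fun_prop)

theorem one_sub_cos_le_maxCurv_mul {a b : ℝ} (hΩ : Ω ≤ π) (hα : α ≠ 0)
    (hBA : B - A = α * (a + b * exp (Ω * I))) :
    1 - cos Ω ≤ maxCurv c * (min a b * sin Ω) := by
  have hK := c.lipschitzOnWith_maxCurv
  have hK' : LipschitzOnWith (maxCurv c).toNNReal (fun s => Ω - c.φ s) (Icc 0 c.L) :=
    LipschitzOnWith.of_dist_le_mul fun s hs t ht => by
      rw [dist_sub_left]; exact hK.dist_le_mul s hs t ht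
  have habs_sin {ψ : ℝ → ℝ} (hψ : ∀ s ∈ Icc 0 c.L, ψ s ∈ Icc 0 π) :
      ∫ s in 0..c.L, |sin (ψ s)| = ∫ s in 0..c.L, sin (ψ s) := by
    refine intervalIntegral.integral_congr fun s hs => abs_of_nonneg ?_
    rw [uIcc_of_le c.hL.le] at hs
    exact Real.sin_nonneg_of_mem_Icc (hψ s hs)
  have hb := abs_cos_sub_cos_le_mul_integral_abs_sin c.hL.le hK
  rw [habs_sin fun s hs => ⟨(c.φ_mem_Icc hs).1, (c.φ_mem_Icc hs).2.trans hΩ⟩,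
    c.integral_sin_φ hα hBA, c.hφL, c.hφ0, Real.cos_zero, abs_sub_comm] at hb
  have ha := abs_cos_sub_cos_le_mul_integral_abs_sin c.hL.le hK'
  rw [habs_sin fun s hs => ⟨sub_nonneg.2 (c.φ_mem_Icc hs).2, by linarith [(c.φ_mem_Icc hs).1]⟩,
    c.integral_sin_sub_φ hα hBA, c.hφL, c.hφ0, sub_self, sub_zero, Real.cos_zero] at ha
  rw [← Real.coe_toNNReal _ c.maxCurv_nonneg]
  rcases min_cases a b with ⟨h, -⟩ | ⟨h, -⟩ <;> rw [h]
  exacts [(le_abs_self _).trans ha, (le_abs_self _).trans hb]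

theorem tan_half_div_min_le_maxCurv {a b : ℝ} (ha : 0 < a) (hb : 0 < b) (hΩ : Ω ∈ Ioo 0 π)
    (hα : α ≠ 0) (hBA : B - A = α * (a + b * exp (Ω * I))) :
    tan (Ω / 2) / min a b ≤ maxCurv c := by
  rw [div_le_iff₀ (lt_min ha hb)]
  refine le_of_mul_le_mul_right ?_ (Real.sin_pos_of_pos_of_lt_pi hΩ.1 hΩ.2)
  rw [Real.tan_half_mul_sin (Real.cos_half_pos ⟨by linarith [hΩ.1, Real.pi_pos], hΩ.2⟩).ne']
  linarith [c.one_sub_cos_le_maxCurv_mul hΩ.2.le hα hBA]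

end CurveE

/-- The tangent angle of a corner rounded off by a circle: straight for length `p`, then a
circular arc of radius `r` turning through `Ω`, then straight again. -/
noncomputable def cornerAngle (p r Ω s : ℝ) : ℝ := (min (max s p) (p + r * Ω) - p) / r

section cornerAngle

variable {p r Ω s : ℝ}

theorem cornerAngle_of_le (hrΩ : 0 ≤ r * Ω) (hs : s ≤ p) : cornerAngle p r Ω s = 0 := by
  simp [cornerAngle, max_eq_right hs, min_eq_left (le_add_of_nonneg_right hrΩ)]

theorem cornerAngle_of_mem_Icc (hs : s ∈ Icc p (p + r * Ω)) :
    cornerAngle p r Ω s = (s - p) / r := by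
  simp [cornerAngle, max_eq_left hs.1, min_eq_left hs.2]

theorem cornerAngle_of_ge (hr : r ≠ 0) (hs : p + r * Ω ≤ s) : cornerAngle p r Ω s = Ω := by
  rw [cornerAngle, min_eq_right (hs.trans (le_max_left _ _)), add_sub_cancel_left,
    mul_div_cancel_left₀ _ hr]

variable (p r Ω)

theorem continuous_cornerAngle : Continuous (cornerAngle p r Ω) := by
  unfold cornerAngle; fun_prop

theorem monotone_cornerAngle (hr : 0 ≤ r) : Monotone (cornerAngle p r Ω) := fun s t hst =>
  div_le_div_of_nonneg_right (by gcongr) hr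

theorem abs_cornerAngle_sub_le (hr : 0 < r) (s t : ℝ) :
    |cornerAngle p r Ω s - cornerAngle p r Ω t| ≤ r⁻¹ * |s - t| := by
  rw [cornerAngle, cornerAngle, ← sub_div, sub_sub_sub_cancel_right, abs_div, abs_of_pos hr,
    div_eq_inv_mul]
  refine mul_le_mul_of_nonneg_left ?_ (inv_nonneg.2 hr.le)
  calc |min (max s p) (p + r * Ω) - min (max t p) (p + r * Ω)|
      ≤ |max s p - max t p| := abs_min_sub_min_le_max _ _ _ _ |>.trans (by simp)
    _ ≤ |s - t| := abs_max_sub_max_le_abs _ _ _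

theorem integral_exp_cornerAngle_mul_I {q : ℝ} (hp : 0 ≤ p) (hr : 0 < r) (hΩ : 0 ≤ Ω)
    (hq : 0 ≤ q) :
    ∫ s in 0..p + r * Ω + q, exp (cornerAngle p r Ω s * I) =
      p + (exp (Ω * I) - 1) / (r⁻¹ * I) + q * exp (Ω * I) := by
  have hrΩ : 0 ≤ r * Ω := mul_nonneg hr.le hΩ
  have hint (a b : ℝ) : IntervalIntegrable (fun s => exp (cornerAngle p r Ω s * I)) volume a b :=
    (by have := continuous_cornerAngle p r Ω; fun_prop : Continuous _).intervalIntegrable a b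
  have hstraight : ∫ s in 0..p, exp (cornerAngle p r Ω s * I) = p := by
    rw [intervalIntegral.integral_congr (g := fun _ => 1) fun s hs => by
      rw [uIcc_of_le hp] at hs; simp [cornerAngle_of_le hrΩ hs.2]]
    simp
  have harc : ∫ s in p..p + r * Ω, exp (cornerAngle p r Ω s * I) =
      (exp (Ω * I) - 1) / (r⁻¹ * I) := by
    have hr' : (r : ℂ) ≠ 0 := by exact_mod_cast hr.ne'
    rw [intervalIntegral.integral_congr (g := fun s => exp (r⁻¹ * I * (s - p : ℝ))) fun s hs => by
      rw [uIcc_of_le (le_add_of_nonneg_right hrΩ)] at hs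
      simp only [cornerAngle_of_mem_Icc hs]; push_cast; ring_nf,
      intervalIntegral.integral_comp_sub_right (fun x : ℝ => exp (r⁻¹ * I * x)),
      integral_exp_mul_complex (by simp [hr.ne'])]
    congr 3
    · push_cast; field_simp; ring
    · simp
  have hturned : ∫ s in p + r * Ω..p + r * Ω + q, exp (cornerAngle p r Ω s * I) =
      q * exp (Ω * I) := by
    rw [intervalIntegral.integral_congr (g := fun _ => exp (Ω * I)) fun s hs => by
      rw [uIcc_of_le (le_add_of_nonneg_right hq)] at hs; simp [cornerAngle_of_ge hr.ne' hs.1]]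
    simp
  rw [← intervalIntegral.integral_add_adjacent_intervals (hint 0 (p + r * Ω)) (hint _ _),
    ← intervalIntegral.integral_add_adjacent_intervals (hint 0 p) (hint _ _),
    hstraight, harc, hturned]

end cornerAngle

noncomputable def cornerCurve (A α : ℂ) {B : ℂ} {p r q Ω : ℝ} (hp : 0 ≤ p) (hr : 0 < r)
    (hq : 0 ≤ q) (hΩ : 0 < Ω)
    (hB : B - A = α * (p + (exp (Ω * I) - 1) / (r⁻¹ * I) + q * exp (Ω * I))) :
    CurveE A B α Ω where
  L := p + r * Ω + q
  X s := A + α * ∫ τ in 0..s, exp (cornerAngle p r Ω τ * I)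
  φ := cornerAngle p r Ω
  hL := by have := mul_pos hr hΩ; linarith
  hX0 := by simp
  hXL := by rw [integral_exp_cornerAngle_mul_I p r Ω hp hr hΩ.le hq, ← hB]; ring
  hφ0 := cornerAngle_of_le (mul_nonneg hr.le hΩ.le) hp
  hφL := cornerAngle_of_ge hr.ne' (le_add_of_nonneg_right hq)
  hmono := (monotone_cornerAngle p r Ω hr.le).monotoneOn _
  hcont := (continuous_cornerAngle p r Ω).continuousOn
  hderiv s _ := by
    have := continuous_cornerAngle p r Ω
    have htangent : Continuous fun τ => exp (cornerAngle p r Ω τ * I) := by fun_prop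
    exact (((htangent.integral_hasStrictDerivAt 0 s).hasDerivAt.const_mul α).const_add
      A).hasDerivWithinAt
  hW2 := ⟨r⁻¹, fun s _ t _ => abs_cornerAngle_sub_le p r Ω hr s t⟩

theorem maxCurv_cornerCurve_le {A α B : ℂ} {p r q Ω : ℝ} (hp : 0 ≤ p) (hr : 0 < r)
    (hq : 0 ≤ q) (hΩ : 0 < Ω)
    (hB : B - A = α * (p + (exp (Ω * I) - 1) / (r⁻¹ * I) + q * exp (Ω * I))) :
    maxCurv (cornerCurve A α hp hr hq hΩ hB) ≤ r⁻¹ :=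
  CurveE.maxCurv_le _ (inv_nonneg.2 hr.le) fun s _ t _ => abs_cornerAngle_sub_le p r Ω hr s t

theorem exists_maxCurv_le_tan_half_div_min {A B α : ℂ} {Ω a b : ℝ} (ha : 0 < a) (hb : 0 < b)
    (hΩ : Ω ∈ Ioo 0 π) (hBA : B - A = α * (a + b * exp (Ω * I))) :
    ∃ c : CurveE A B α Ω, maxCurv c ≤ tan (Ω / 2) / min a b := by
  have hturn := exp_mul_I_sub_one_eq_tan_half
    (Real.cos_half_pos ⟨by linarith [hΩ.1, Real.pi_pos], hΩ.2⟩).ne'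
  have htan := Real.tan_half_pos hΩ
  set T := tan (Ω / 2)
  set m := min a b
  have hm : 0 < m := lt_min ha hb
  have hp : 0 ≤ a - m := sub_nonneg.2 (min_le_left a b)
  have hq : 0 ≤ b - m := sub_nonneg.2 (min_le_right a b)
  have hr : 0 < m / T := div_pos hm htan
  have hB : B - A = α * ((a - m : ℝ) + (exp (Ω * I) - 1) / ((m / T)⁻¹ * I) +
      (b - m : ℝ) * exp (Ω * I)) := by
    have hTC : (T : ℂ) ≠ 0 := by exact_mod_cast htan.ne'
    have hmC : (m : ℂ) ≠ 0 := by exact_mod_cast hm.ne'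
    rw [hBA, hturn]
    push_cast
    field_simp
    ring
  exact ⟨cornerCurve A α hp hr hq hΩ.1 hB, by
    simpa using maxCurv_cornerCurve_le hp hr hq hΩ.1 hB⟩

theorem sub_eq_mul_add_mul_exp {O A B α β : ℂ} {Ω : ℝ} (hOA : O ≠ A) (hOB : O ≠ B)
    (hα : α = (O - A) / (‖O - A‖ : ℂ)) (hβ : β = (B - O) / (‖B - O‖ : ℂ))
    (hang : β = α * exp (Ω * I)) :
    B - A = α * (‖O - A‖ + ‖B - O‖ * exp (Ω * I)) := by
  have ha : (‖O - A‖ : ℂ) ≠ 0 := by simpa [sub_eq_zero] using hOA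
  have hb : (‖B - O‖ : ℂ) ≠ 0 := by simpa [sub_eq_zero] using hOB.symm
  calc B - A = β * ‖B - O‖ + α * ‖O - A‖ := by rw [hα, hβ]; field_simp; ring
    _ = α * (‖O - A‖ + ‖B - O‖ * exp (Ω * I)) := by rw [hang]; ring

theorem stmt15_general (O A B : ℂ) (hOA : O ≠ A) (hOB : O ≠ B)
    (α β : ℂ)
    (hα : α = (O - A) / (‖O - A‖ : ℂ))
    (hβ : β = (B - O) / (‖B - O‖ : ℂ))
    (Ω : ℝ) (hΩ : Ω ∈ Ioo 0 Real.pi)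
    (hang : β = α * Complex.exp ((Ω : ℂ) * Complex.I)) :
    0 < (⨅ c : CurveE A B α Ω, maxCurv c) ∧
    ∃ c : CurveE A B α Ω, maxCurv c = ⨅ c' : CurveE A B α Ω, maxCurv c' := by
  have ha : 0 < ‖O - A‖ := norm_pos_iff.2 (sub_ne_zero.2 hOA)
  have hb : 0 < ‖B - O‖ := norm_pos_iff.2 (sub_ne_zero.2 hOB.symm)
  have hα0 : α ≠ 0 := by
    rw [hα]; exact div_ne_zero (sub_ne_zero.2 hOA) (by exact_mod_cast ha.ne')
  have hBA := sub_eq_mul_add_mul_exp hOA hOB hα hβ hang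
  have hlower (c : CurveE A B α Ω) := c.tan_half_div_min_le_maxCurv ha hb hΩ hα0 hBA
  obtain ⟨c₀, hc₀⟩ := exists_maxCurv_le_tan_half_div_min ha hb hΩ hBA
  have hinf : (⨅ c : CurveE A B α Ω, maxCurv c) = maxCurv c₀ :=
    IsLeast.csInf_eq ⟨mem_range_self c₀, forall_mem_range.2 fun c => hc₀.trans (hlower c)⟩
  rw [hinf]
  exact ⟨(div_pos (Real.tan_half_pos hΩ) (lt_min ha hb)).trans_le (hlower c₀), c₀, rfl⟩

/-- Existence of an optimal curve: `δ₀ = inf_{Z ∈ 𝓔} ‖‖Z''‖‖_{L^∞}` is strictly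
positive and attained by some curve of 𝓔. -/
theorem stmt15 (O A B : ℂ) (hOA : O ≠ A) (hOB : O ≠ B) (hAB : A ≠ B)
    (α β : ℂ)
    (hα : α = (O - A) / (‖O - A‖ : ℂ))
    (hβ : β = (B - O) / (‖B - O‖ : ℂ))
    (Ω : ℝ) (hΩ : Ω ∈ Ioo 0 Real.pi)
    (hang : β = α * Complex.exp ((Ω : ℂ) * Complex.I))
    (hne : Nonempty (CurveE A B α Ω)) :
    0 < (⨅ c : CurveE A B α Ω, maxCurv c) ∧
    ∃ c : CurveE A B α Ω, maxCurv c = ⨅ c' : CurveE A B α Ω, maxCurv c' :=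
  stmt15_general O A B hOA hOB α β hα hβ Ω hΩ hang
end
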